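/- arXiv:2510.16875 — 3 statements merged into one kernel-verified Lean document; each statement's English description precedes it below -/
import Mathlib

section
/- Assume Dubinin's bound: for every complex polynomial F of degree n ≥ 2 and every a ∈ ℂ there exists a critical point b of F (F'(b) = 0) with |(F(a) − F(b))/(a − b)| ≥ |F'(a)|/n² (where the quotient is interpreted as F'(a) if b = a). Then for every odd complex polynomial P of degree d ≥ 3 with P(0) = 0 and P'(0) = 1, there exists a critical point ζ of P with |P(ζ)/ζ| ≥ 1/d. -/
/-!
Since `P` is odd, `P²` is even, so `P(z)² = F(z²)` for a polynomial `F` of degree `d` with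
`F(0) = 0` and `F'(0) = 1`. Dubinin's bound for `F` at `a = 0` gives a critical point `b ≠ 0` of `F`
with `|F(b)/b| ≥ 1/d²`. For a square root `ζ` of `b`, differentiating `F(z²) = P(z)²` gives
`2ζ F'(ζ²) = 2 P(ζ) P'(ζ)`, so `P(ζ) = 0` or `P'(ζ) = 0`; the first is excluded by `F(b) ≠ 0`.
Finally `|P(ζ)/ζ|² = |F(b)/b| ≥ 1/d²`.
-/

open Polynomial

namespace Polynomial

lemma coeff_comp_neg_X {R : Type*} [Ring R] (p : R[X]) (n : ℕ) :
    (p.comp (-X)).coeff n = p.coeff n * (-1) ^ n := by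
  rw [← comp_C_mul_X_coeff, C_neg, C_1, neg_one_mul]

lemma expand_contract_two_of_comp_neg_X {R : Type*} [CommRing R] [IsAddTorsionFree R]
    {q : R[X]} (hq : q.comp (-X) = q) : expand R 2 (contract 2 q) = q := by
  ext n
  rw [coeff_expand two_pos, coeff_contract two_ne_zero]
  split_ifs with h
  · rw [Nat.div_mul_cancel h]
  · have hodd : Odd n := Nat.odd_iff.mpr (by omega)
    have := coeff_comp_neg_X q n
    rw [hq, hodd.neg_one_pow, mul_neg_one] at this
    exact (self_eq_neg.mp this).symm

lemma coeff_sq_two_of_coeff_zero_eq_zero {R : Type*} [CommSemiring R] {p : R[X]}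
    (hp : p.coeff 0 = 0) : (p ^ 2).coeff 2 = p.coeff 1 ^ 2 := by
  rw [sq, coeff_mul, Finset.Nat.sum_antidiagonal_eq_sum_range_succ_mk]
  simp [Finset.sum_range_succ, hp, sq]

lemma isRoot_or_isRoot_derivative_of_expand_two_eq_sq {K : Type*} [Field K] [CharZero K]
    {f p : K[X]} (h : expand K 2 f = p ^ 2) {z : K} (hf : (derivative f).IsRoot (z ^ 2)) :
    p.IsRoot z ∨ (derivative p).IsRoot z := by
  have := congrArg (eval z ∘ derivative) h
  simp only [Function.comp_apply, derivative_expand, derivative_sq, eval_mul, expand_eval,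
    hf.eq_zero] at this
  simpa using this

lemma eval_derivative_zero_of_expand_two_eq_sq {R : Type*} [CommSemiring R] {f p : R[X]}
    (h : expand R 2 f = p ^ 2) (hp : p.eval 0 = 0) :
    (derivative f).eval 0 = (derivative p).eval 0 ^ 2 := by
  simp only [← coeff_zero_eq_eval_zero, coeff_derivative, Nat.cast_zero, zero_add, mul_one]
  rw [← coeff_expand_mul two_pos, h, one_mul,
    coeff_sq_two_of_coeff_zero_eq_zero (by rwa [coeff_zero_eq_eval_zero])]

end Polynomial

theorem stmt_7_general
    (dubinin : ∀ (F : Polynomial ℂ) (n : ℕ), 2 ≤ n → F.natDegree = n → ∀ a : ℂ,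
      ∃ b : ℂ, (Polynomial.derivative F).eval b = 0 ∧
        (if b = a then ‖(Polynomial.derivative F).eval a‖
          else ‖(F.eval a - F.eval b) / (a - b)‖)
          ≥ ‖(Polynomial.derivative F).eval a‖ / (n : ℝ) ^ 2)
    (P : Polynomial ℂ) (d : ℕ) (hd : 3 ≤ d)
    (hodd : ∀ z : ℂ, P.eval (-z) = -P.eval z)
    (hdeg : P.natDegree = d)
    (h1 : (Polynomial.derivative P).eval 0 = 1) :
    ∃ ζ : ℂ, (Polynomial.derivative P).eval ζ = 0 ∧
      ‖P.eval ζ / ζ‖ ≥ 1 / (d : ℝ) := by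
  have hP0 : P.eval 0 = 0 := self_eq_neg.mp (by simpa using hodd 0)
  set F := contract 2 (P ^ 2)
  have hF : expand ℂ 2 F = P ^ 2 := expand_contract_two_of_comp_neg_X <| by
    rw [pow_comp, show P.comp (-X) = -P from funext fun z => by simpa using hodd z, neg_sq]
  have hFdeg : F.natDegree = d := by
    have := congrArg natDegree hF
    rw [natDegree_expand, natDegree_pow, hdeg] at this
    omega
  have hF0 : F.eval 0 = 0 := by simpa [hP0] using congrArg (eval 0) hF
  have hF'0 : (derivative F).eval 0 = 1 := by
    rw [eval_derivative_zero_of_expand_two_eq_sq hF hP0, h1, one_pow]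
  obtain ⟨b, hb, hbound⟩ := dubinin F d (by omega) hFdeg 0
  have hb0 : b ≠ 0 := by rintro rfl; simp [hF'0] at hb
  rw [if_neg hb0, hF'0, hF0, zero_sub, zero_sub, neg_div_neg_eq, norm_one] at hbound
  obtain ⟨ζ, rfl⟩ := IsAlgClosed.exists_pow_nat_eq b two_pos
  have hFζ : F.eval (ζ ^ 2) = P.eval ζ ^ 2 := by simpa using congrArg (eval ζ) hF
  rw [hFζ, ← div_pow, norm_pow, ge_iff_le, ← one_div_pow] at hbound
  have hd0 : (0 : ℝ) < 1 / d := by positivity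
  refine ⟨ζ, ?_, le_of_pow_le_pow_left₀ two_ne_zero (norm_nonneg _) hbound⟩
  refine (isRoot_or_isRoot_derivative_of_expand_two_eq_sq hF hb).resolve_left fun hζ => ?_
  rw [hζ.eq_zero, zero_div, norm_zero, zero_pow two_ne_zero] at hbound
  exact (pow_pos hd0 2).not_ge hbound

theorem stmt_7
    (dubinin : ∀ (F : Polynomial ℂ) (n : ℕ), 2 ≤ n → F.natDegree = n → ∀ a : ℂ,
      ∃ b : ℂ, (Polynomial.derivative F).eval b = 0 ∧
        (if b = a then ‖(Polynomial.derivative F).eval a‖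
          else ‖(F.eval a - F.eval b) / (a - b)‖)
          ≥ ‖(Polynomial.derivative F).eval a‖ / (n : ℝ) ^ 2)
    (P : Polynomial ℂ) (d : ℕ) (hd : 3 ≤ d)
    (hodd : ∀ z : ℂ, P.eval (-z) = -P.eval z)
    (hdeg : P.natDegree = d) (h0 : P.eval 0 = 0)
    (h1 : (Polynomial.derivative P).eval 0 = 1) :
    ∃ ζ : ℂ, (Polynomial.derivative P).eval ζ = 0 ∧
      ‖P.eval ζ / ζ‖ ≥ 1 / (d : ℝ) :=
  stmt_7_general dubinin P d hd hodd hdeg h1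
end

section
/- Assume Dubinin's bound: for every complex polynomial F of degree n ≥ 2 and every a ∈ ℂ there exists a critical point b of F with |(F(a) − F(b))/(a − b)| ≥ |F'(a)|/n². Let P be a complex polynomial of degree d ≥ 2 with P(0) = 0, P'(0) = 1, and suppose there is a primitive k-th root of unity λ (k ≥ 2) with P(λz) = λ·P(z) for all z. Then there exists a critical point ζ of P with |P(ζ)/ζ| ≥ d^(−2/k). -/
/-!
The symmetry makes `P ^ k` invariant under `z ↦ λ z`, so only powers `z ^ (k m)` occur in it and
`P ^ k = F (z ^ k)` for a polynomial `F` of degree `d` with `F 0 = 0`, `F' 0 = 1`. Dubinin's bound at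
`a = 0` gives a critical point `b` of `F` with `|F b / b| ≥ 1 / d²`. For a `k`-th root `ζ` of `b`,
`(P ζ / ζ) ^ k = F b / b`, and the chain rule `k P(ζ)^(k-1) P'(ζ) = k ζ^(k-1) F'(b) = 0` together
with `F b ≠ 0` makes `ζ` a critical point of `P`.
-/

open Polynomial

namespace Polynomial

variable {R : Type*}

theorem coeff_eq_zero_of_comp_C_mul_X_eq [CommRing R] [IsDomain R] {p : R[X]} {c : R}
    (h : p.comp (C c * X) = p) {n : ℕ} (hn : c ^ n ≠ 1) : p.coeff n = 0 := by
  have hcoeff := congrArg (coeff · n) h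
  simp only [comp_C_mul_X_coeff] at hcoeff
  have : p.coeff n * (c ^ n - 1) = 0 := by linear_combination hcoeff
  exact (mul_eq_zero.1 this).resolve_right (sub_ne_zero.2 hn)

theorem expand_contract_of_coeff_eq_zero [CommSemiring R] {p : R[X]} {k : ℕ} (hk : k ≠ 0)
    (h : ∀ n, ¬k ∣ n → p.coeff n = 0) : expand R k (contract k p) = p := by
  ext n
  rw [coeff_expand (Nat.pos_of_ne_zero hk), coeff_contract hk]
  split_ifs with hn
  · rw [Nat.div_mul_cancel hn]
  · exact (h n hn).symm

theorem _root_.IsPrimitiveRoot.exists_expand_eq_of_comp_C_mul_X_eq [CommRing R] [IsDomain R]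
    {p : R[X]} {c : R} {k : ℕ} (hc : IsPrimitiveRoot c k) (hk : k ≠ 0)
    (h : p.comp (C c * X) = p) : ∃ q, expand R k q = p :=
  ⟨contract k p, expand_contract_of_coeff_eq_zero hk fun n hn =>
    coeff_eq_zero_of_comp_C_mul_X_eq h fun h1 => hn ((hc.pow_eq_one_iff_dvd n).1 h1)⟩

theorem _root_.IsPrimitiveRoot.exists_expand_eq_pow_of_eval_mul_eq [CommRing R] [IsDomain R]
    [Infinite R] {P : R[X]} {c : R} {k : ℕ} (hc : IsPrimitiveRoot c k) (hk : k ≠ 0)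
    (h : ∀ z, P.eval (c * z) = c * P.eval z) : ∃ F, expand R k F = P ^ k :=
  hc.exists_expand_eq_of_comp_C_mul_X_eq hk <| Polynomial.funext fun z => by
    simp [eval_comp, h, mul_pow, hc.pow_eq_one]

theorem eval_zero_derivative [Semiring R] (p : R[X]) : p.derivative.eval 0 = p.coeff 1 := by
  simp [← coeff_zero_eq_eval_zero, coeff_derivative]

theorem coeff_pow_self_of_coeff_zero_eq_zero [CommSemiring R] {p : R[X]} (h : p.coeff 0 = 0)
    (k : ℕ) : (p ^ k).coeff k = p.coeff 1 ^ k := by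
  obtain ⟨q, rfl⟩ := X_dvd_iff.2 h
  simpa [mul_pow, coeff_zero_eq_eval_zero] using coeff_X_pow_mul (q ^ k) k 0

theorem eval_derivative_eq_zero_of_expand_eq_pow [CommRing R] [IsDomain R] [CharZero R]
    {F P : R[X]} {k : ℕ} (hk : k ≠ 0) (hFP : expand R k F = P ^ k) {z : R}
    (hF' : F.derivative.eval (z ^ k) = 0) (hF : F.eval (z ^ k) ≠ 0) :
    P.derivative.eval z = 0 := by
  have hP : P.eval z ≠ 0 := by
    rw [← expand_eval, hFP, eval_pow] at hF
    exact ne_zero_pow hk hF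
  -- differentiate `expand k F = P ^ k`: `k z^(k-1) F'(z^k) = k P(z)^(k-1) P'(z)`
  simpa [derivative_expand, derivative_pow, expand_eval, hF', hk, hP] using
    congrArg (eval z ∘ derivative) hFP

end Polynomial

theorem Real.rpow_div_natCast_le_of_rpow_le_pow {a x : ℝ} (ha : 0 ≤ a) (hx : 0 ≤ x) {k : ℕ}
    (hk : k ≠ 0) {r : ℝ} (h : a ^ r ≤ x ^ k) : a ^ (r / k) ≤ x := by
  rwa [div_eq_mul_inv, Real.rpow_mul ha, Real.rpow_inv_le_iff_of_pos (Real.rpow_nonneg ha r) hx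
    (by positivity), Real.rpow_natCast]

theorem stmt_8
    (dubinin : ∀ (F : Polynomial ℂ) (n : ℕ), 2 ≤ n → F.natDegree = n → ∀ a : ℂ,
      ∃ b : ℂ, (Polynomial.derivative F).eval b = 0 ∧
        (if b = a then ‖(Polynomial.derivative F).eval a‖
          else ‖(F.eval a - F.eval b) / (a - b)‖)
          ≥ ‖(Polynomial.derivative F).eval a‖ / (n : ℝ) ^ 2)
    (P : Polynomial ℂ) (d : ℕ) (hd : 2 ≤ d)
    (hdeg : P.natDegree = d) (h0 : P.eval 0 = 0)
    (h1 : (Polynomial.derivative P).eval 0 = 1)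
    (k : ℕ) (hk : 2 ≤ k) (lam : ℂ) (hlam : IsPrimitiveRoot lam k)
    (hsym : ∀ z : ℂ, P.eval (lam * z) = lam * P.eval z) :
    ∃ ζ : ℂ, (Polynomial.derivative P).eval ζ = 0 ∧
      ‖P.eval ζ / ζ‖ ≥ (d : ℝ) ^ (-(2 : ℝ) / (k : ℝ)) := by
  have hkpos : 0 < k := by omega
  have hk0 : k ≠ 0 := hkpos.ne'
  obtain ⟨F, hF⟩ := hlam.exists_expand_eq_pow_of_eval_mul_eq hk0 hsym
  have hFdeg : F.natDegree = d := by
    have := natDegree_expand k F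
    rw [hF, natDegree_pow, hdeg] at this
    exact Nat.eq_of_mul_eq_mul_right (hkpos) (this.symm.trans (mul_comm k d))
  have hF0 : F.eval 0 = 0 := by
    have := expand_eval k F 0
    rwa [hF, eval_pow, h0, zero_pow hk0, eq_comm] at this
  have hF'0 : F.derivative.eval 0 = 1 := by
    rw [eval_zero_derivative, ← coeff_expand_mul (hkpos), one_mul, hF,
      coeff_pow_self_of_coeff_zero_eq_zero (by rwa [coeff_zero_eq_eval_zero]),
      ← eval_zero_derivative, h1, one_pow]
  obtain ⟨b, hb, hbd⟩ := dubinin F d hd hFdeg 0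
  have hb0 : b ≠ 0 := by rintro rfl; simp [hF'0] at hb
  rw [if_neg hb0, hF'0, norm_one, hF0, zero_sub, zero_sub, neg_div_neg_eq] at hbd
  obtain ⟨ζ, rfl⟩ := IsAlgClosed.exists_pow_nat_eq b (hkpos)
  have hFb : F.eval (ζ ^ k) ≠ 0 := by
    intro h
    rw [h, zero_div, norm_zero] at hbd
    linarith [show (0 : ℝ) < 1 / (d : ℝ) ^ 2 by positivity]
  refine ⟨ζ, eval_derivative_eq_zero_of_expand_eq_pow hk0 hF hb hFb, ?_⟩
  apply Real.rpow_div_natCast_le_of_rpow_le_pow (Nat.cast_nonneg d) (norm_nonneg _) hk0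
  rw [← norm_pow, div_pow, ← eval_pow, ← hF, expand_eval, Real.rpow_neg (Nat.cast_nonneg d),
    Real.rpow_two, ← one_div]
  exact hbd
end

section
/- Let Q be a complex polynomial with Q(0) = 1, H(u) = u·Q(u)², and suppose d ≥ 3 and there exists a critical point w of H with |H(w)/w| ≥ 1/d² (w ≠ 0). Then the odd polynomial P(z) = z·Q(z²) has a critical point c with |P(c)/c| ≥ 1/d. -/
/-! With `c² = w`, the chain rule gives `H'(c²) = Q(c²) · P'(c)` and moreover
`H(w) / w = Q(w)²`, `P(c) / c = Q(w)`. The hypothesis `|Q(w)|² ≥ 1/d²` forces `Q(w) ≠ 0`,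
so `c` is a critical point of `P`, and taking square roots gives `|P(c)/c| = |Q(w)| ≥ 1/d`. -/

open Polynomial

section

variable {R : Type*} [CommRing R]

theorem eval_derivative_X_mul_sq (Q : R[X]) (c : R) :
    (derivative (X * Q ^ 2)).eval (c ^ 2) =
      Q.eval (c ^ 2) * (derivative (X * Q.comp (X ^ 2))).eval c := by
  simp only [derivative_mul, derivative_X, derivative_pow, derivative_comp, eval_add, eval_mul,
    eval_one, eval_X, eval_pow, eval_comp, eval_C, Nat.cast_ofNat]
  ring

end

section

variable {K : Type*} [Field K]

theorem eval_X_mul_sq_div (Q : K[X]) {w : K} (hw : w ≠ 0) :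
    (X * Q ^ 2).eval w / w = Q.eval w ^ 2 := by
  rw [eval_mul, eval_pow, eval_X, mul_div_cancel_left₀ _ hw]

theorem eval_X_mul_comp_sq_div (Q : K[X]) {c : K} (hc : c ≠ 0) :
    (X * Q.comp (X ^ 2)).eval c / c = Q.eval (c ^ 2) := by
  rw [eval_mul, eval_comp, eval_pow, eval_X, mul_div_cancel_left₀ _ hc]

end

theorem stmt_17_general (Q : Polynomial ℂ) (d : ℝ) (hd : 3 ≤ d)
    (w : ℂ) (hw : w ≠ 0)
    (hcrit : (Polynomial.derivative (X * Q ^ 2)).eval w = 0)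
    (hH : ‖(X * Q ^ 2).eval w / w‖ ≥ 1 / d ^ 2) :
    ∃ c : ℂ, (Polynomial.derivative (X * Q.comp (X ^ 2))).eval c = 0 ∧
      ‖(X * Q.comp (X ^ 2)).eval c / c‖ ≥ 1 / d := by
  obtain ⟨c, rfl⟩ : ∃ c : ℂ, c ^ 2 = w := IsAlgClosed.exists_pow_nat_eq w two_pos
  have hc : c ≠ 0 := by rintro rfl; simp at hw
  rw [eval_X_mul_sq_div Q hw, norm_pow, ge_iff_le, ← one_div_pow] at hH
  have hQ : Q.eval (c ^ 2) ≠ 0 := by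
    intro h
    rw [h, norm_zero, zero_pow two_ne_zero] at hH
    exact (pow_pos (one_div_pos.mpr (by linarith)) 2).not_ge hH
  refine ⟨c, ?_, ?_⟩
  · rw [eval_derivative_X_mul_sq] at hcrit
    exact (mul_eq_zero.mp hcrit).resolve_left hQ
  · rw [eval_X_mul_comp_sq_div Q hc, ge_iff_le]
    calc 1 / d ≤ |1 / d| := le_abs_self _
      _ ≤ |‖Q.eval (c ^ 2)‖| := sq_le_sq.mp hH
      _ = ‖Q.eval (c ^ 2)‖ := abs_norm _

theorem stmt_17 (Q : Polynomial ℂ) (hQ0 : Q.eval 0 = 1) (d : ℝ) (hd : 3 ≤ d)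
    (w : ℂ) (hw : w ≠ 0)
    (hcrit : (Polynomial.derivative (X * Q ^ 2)).eval w = 0)
    (hH : ‖(X * Q ^ 2).eval w / w‖ ≥ 1 / d ^ 2) :
    ∃ c : ℂ, (Polynomial.derivative (X * Q.comp (X ^ 2))).eval c = 0 ∧
      ‖(X * Q.comp (X ^ 2)).eval c / c‖ ≥ 1 / d :=
  stmt_17_general Q d hd w hw hcrit hH
end
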